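/- For any positive definite matrix A in R^{p×p}, the unique minimizer over the set of p×p lower triangular matrices L with positive diagonal entries of the Cholesky loss L_chol(L; A) = (1/2)·tr(A·L·Lᵀ) − log|det(L)| is the Cholesky factor C(A⁻¹) of A⁻¹ (the unique lower triangular matrix with positive diagonal such that A⁻¹ = C·Cᵀ). -/

import Mathlib

/-!
Write `L = C * M` with `M = C⁻¹ * L`, again lower triangular with positive diagonal. Since
`A = C⁻ᵀ C⁻¹`, the trace term of `L_chol(L; A)` becomes `tr (M Mᵀ) = ∑ᵢ |Mᵢ|²` and
`log det L = log det C + ∑ᵢ log Mᵢᵢ`, so `L_chol(L; A) + log det C = ∑ᵢ (|Mᵢ|² / 2 - log Mᵢᵢ)`.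
Row by row, `2 log Mᵢᵢ ≤ Mᵢᵢ² - 1 ≤ |Mᵢ|² - 1`, with equality only when the row `Mᵢ` is the
unit vector `eᵢ`. Hence the minimum is attained exactly at `M = 1`, i.e. at `L = C`.
-/

open Matrix

/-- Cholesky loss: L_chol(L; A) = (1/2)·tr(A L Lᵀ) − log det L. -/
noncomputable def cholLoss {p : ℕ} (A L : Matrix (Fin p) (Fin p) ℝ) : ℝ :=
  (1 / 2) * (A * L * Lᵀ).trace - Real.log L.det

lemma Real.two_mul_log_le_sq_sub_one {x : ℝ} (hx : 0 < x) : 2 * Real.log x ≤ x ^ 2 - 1 := by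
  simpa [Real.log_pow] using Real.log_le_sub_one_of_pos (pow_pos hx 2)

lemma Real.two_mul_log_lt_sq_sub_one {x : ℝ} (hx : 0 < x) (hx1 : x ≠ 1) :
    2 * Real.log x < x ^ 2 - 1 := by
  have hsq : x ^ 2 ≠ 1 := by
    rwa [Ne, pow_eq_one_iff_of_nonneg hx.le two_ne_zero]
  simpa [Real.log_pow] using Real.log_lt_sub_one_of_pos (pow_pos hx 2) hsq

section Row

variable {n : Type*} [Fintype n] [DecidableEq n]

lemma dotProduct_self_eq_sq_add_sum_erase (v : n → ℝ) (i : n) :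
    v ⬝ᵥ v = v i ^ 2 + ∑ j ∈ Finset.univ.erase i, v j ^ 2 := by
  rw [Finset.add_sum_erase _ (fun j => v j ^ 2) (Finset.mem_univ i), dotProduct]
  simp only [sq]

variable {v : n → ℝ} {i : n}

lemma two_mul_log_le_dotProduct_self_sub_one (hv : 0 < v i) :
    2 * Real.log (v i) ≤ v ⬝ᵥ v - 1 := by
  have hrest : 0 ≤ ∑ j ∈ Finset.univ.erase i, v j ^ 2 := by positivity
  rw [dotProduct_self_eq_sq_add_sum_erase v i]
  linarith [Real.two_mul_log_le_sq_sub_one hv]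

lemma eq_single_of_two_mul_log_eq_dotProduct_self_sub_one (hv : 0 < v i)
    (h : 2 * Real.log (v i) = v ⬝ᵥ v - 1) : v = Pi.single i 1 := by
  rw [dotProduct_self_eq_sq_add_sum_erase v i] at h
  have hrest_nonneg : ∀ j ∈ Finset.univ.erase i, 0 ≤ v j ^ 2 := fun j _ => sq_nonneg (v j)
  have hrest : ∑ j ∈ Finset.univ.erase i, v j ^ 2 = 0 := by
    linarith [Real.two_mul_log_le_sq_sub_one hv, Finset.sum_nonneg hrest_nonneg]
  have hvi : v i = 1 := by
    by_contra hne
    linarith [Real.two_mul_log_lt_sq_sub_one hv hne]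
  funext j
  rcases eq_or_ne j i with rfl | hji
  · simp [hvi]
  · have hj := (Finset.sum_eq_zero_iff_of_nonneg hrest_nonneg).1 hrest j
      (Finset.mem_erase.2 ⟨hji, Finset.mem_univ j⟩)
    simpa [Pi.single_apply, hji] using hj

end Row

namespace Matrix.IsLowerTriangular

variable {m R : Type*} [LinearOrder m] [Fintype m]

lemma mul_apply_self [NonUnitalNonAssocSemiring R] {M N : Matrix m m R}
    (hM : M.IsLowerTriangular) (hN : N.IsLowerTriangular) (i : m) :
    (M * N) i i = M i i * N i i := by
  rw [mul_apply, Finset.sum_eq_single i]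
  · intro k _ hki
    rcases lt_or_gt_of_ne hki with h | h
    · rw [hN h, mul_zero]
    · rw [hM h, zero_mul]
  · exact fun h => absurd (Finset.mem_univ i) h

variable [DecidableEq m]

lemma inv [CommRing R] {M : Matrix m m R} (hM : M.IsLowerTriangular) :
    M⁻¹.IsLowerTriangular := by
  by_cases h : IsUnit M.det
  · have := M.invertibleOfIsUnitDet h
    exact blockTriangular_inv_of_blockTriangular hM
  · rw [nonsing_inv_apply_not_isUnit M h]
    exact blockTriangular_zero

lemma inv_apply_self [Field R] {M : Matrix m m R} (hM : M.IsLowerTriangular)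
    (h : IsUnit M.det) (i : m) : M⁻¹ i i = (M i i)⁻¹ := by
  have hii : M⁻¹ i i * M i i = 1 := by
    rw [← hM.inv.mul_apply_self hM, nonsing_inv_mul M h, one_apply_eq]
  exact eq_inv_of_mul_eq_one_left hii

lemma det_pos [CommRing R] [PartialOrder R] [IsStrictOrderedRing R] {M : Matrix m m R}
    (hM : M.IsLowerTriangular) (hdiag : ∀ i, 0 < M i i) : 0 < M.det := by
  rw [det_of_isLowerTriangular M hM]
  exact Finset.prod_pos fun i _ => hdiag i

lemma inv_mul_apply_self_pos [Field R] [LinearOrder R] [IsStrictOrderedRing R]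
    {C L : Matrix m m R} (hC : C.IsLowerTriangular) (hCdiag : ∀ i, 0 < C i i)
    (hL : L.IsLowerTriangular) (hLdiag : ∀ i, 0 < L i i) (i : m) : 0 < (C⁻¹ * L) i i := by
  rw [hC.inv.mul_apply_self hL, hC.inv_apply_self (hC.det_pos hCdiag).ne'.isUnit]
  exact mul_pos (inv_pos.2 (hCdiag i)) (hLdiag i)

end Matrix.IsLowerTriangular

lemma Matrix.transpose_mul_mul_self_eq_one_of_inv_eq {n R : Type*} [Fintype n] [DecidableEq n]
    [CommRing R] {A C : Matrix n n R} (hC : A⁻¹ = C * Cᵀ) (hCdet : IsUnit C.det) :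
    Cᵀ * A * C = 1 := by
  have hA : IsUnit A.det := by
    rw [← isUnit_nonsing_inv_det_iff, hC, det_mul, det_transpose]
    exact hCdet.mul hCdet
  have hCt : IsUnit Cᵀ.det := by rwa [det_transpose]
  calc Cᵀ * A * C = Cᵀ * A * C * (Cᵀ * Cᵀ⁻¹) := by rw [mul_nonsing_inv _ hCt, mul_one]
    _ = Cᵀ * (A * A⁻¹) * Cᵀ⁻¹ := by rw [hC]; simp only [Matrix.mul_assoc]
    _ = 1 := by rw [mul_nonsing_inv _ hA, mul_one, mul_nonsing_inv _ hCt]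

section CholLoss

variable {p : ℕ}

lemma cholLoss_mul_left {A C M : Matrix (Fin p) (Fin p) ℝ} (hAC : Cᵀ * A * C = 1)
    (hC : C.det ≠ 0) (hM : M.det ≠ 0) :
    cholLoss A (C * M) = cholLoss 1 M - Real.log C.det := by
  have htrace : (A * (C * M) * (C * M)ᵀ).trace = (1 * M * Mᵀ).trace := by
    rw [transpose_mul, show A * (C * M) * (Mᵀ * Cᵀ) = A * C * (M * Mᵀ) * Cᵀ by
      simp only [Matrix.mul_assoc], trace_mul_comm, ← hAC]
    simp only [Matrix.mul_assoc]
  rw [cholLoss, cholLoss, htrace, det_mul, Real.log_mul hC hM]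
  ring

lemma two_mul_cholLoss_one_sub_card {M : Matrix (Fin p) (Fin p) ℝ} (hM : M.IsLowerTriangular)
    (hdiag : ∀ i, 0 < M i i) :
    2 * cholLoss 1 M - p = ∑ i, (M i ⬝ᵥ M i - 1 - 2 * Real.log (M i i)) := by
  have htrace : (1 * M * Mᵀ).trace = ∑ i, M i ⬝ᵥ M i := by
    simp only [Matrix.one_mul, trace, diag_apply, mul_apply', transpose_apply]
  rw [cholLoss, htrace, det_of_isLowerTriangular M hM,
    Real.log_prod fun i _ => (hdiag i).ne', Finset.sum_sub_distrib, Finset.sum_sub_distrib,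
    ← Finset.mul_sum]
  simp only [Finset.sum_const, Finset.card_univ, Fintype.card_fin, nsmul_eq_mul, mul_one]
  ring

lemma cholLoss_one_one : cholLoss 1 (1 : Matrix (Fin p) (Fin p) ℝ) = p / 2 := by
  simp [cholLoss]
  ring

section

variable {M : Matrix (Fin p) (Fin p) ℝ} (hM : M.IsLowerTriangular) (hdiag : ∀ i, 0 < M i i)
include hM hdiag

lemma half_card_le_cholLoss_one : (p : ℝ) / 2 ≤ cholLoss 1 M := by
  have hsum := two_mul_cholLoss_one_sub_card hM hdiag
  have hterm : ∀ i ∈ Finset.univ, 0 ≤ M i ⬝ᵥ M i - 1 - 2 * Real.log (M i i) :=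
    fun i _ => sub_nonneg.2 (two_mul_log_le_dotProduct_self_sub_one (hdiag i))
  linarith [Finset.sum_nonneg hterm]

lemma eq_one_of_cholLoss_one_eq_half_card (h : cholLoss 1 M = p / 2) : M = 1 := by
  have hterm : ∀ i ∈ Finset.univ, 0 ≤ M i ⬝ᵥ M i - 1 - 2 * Real.log (M i i) :=
    fun i _ => sub_nonneg.2 (two_mul_log_le_dotProduct_self_sub_one (hdiag i))
  have hzero := (Finset.sum_eq_zero_iff_of_nonneg hterm).1
    (by rw [← two_mul_cholLoss_one_sub_card hM hdiag, h]; ring)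
  ext i j
  have hrow : M i = Pi.single i 1 := eq_single_of_two_mul_log_eq_dotProduct_self_sub_one
    (hdiag i) (sub_eq_zero.1 (hzero i (Finset.mem_univ i))).symm
  simp only [hrow, one_apply, Pi.single_apply, @eq_comm _ j i]

end

end CholLoss

theorem cholLoss_unique_minimizer {p : ℕ} (A : Matrix (Fin p) (Fin p) ℝ)
    (C : Matrix (Fin p) (Fin p) ℝ)
    (hCtri : ∀ i j, i < j → C i j = 0) (hCdiag : ∀ i, 0 < C i i)
    (hC : A⁻¹ = C * Cᵀ) :
    ∀ L : Matrix (Fin p) (Fin p) ℝ, (∀ i j, i < j → L i j = 0) →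
      (∀ i, 0 < L i i) →
      cholLoss A C ≤ cholLoss A L ∧ (cholLoss A L = cholLoss A C → L = C) := by
  intro L hLtri hLdiag
  have hClow : C.IsLowerTriangular := fun i j h => hCtri i j h
  have hLlow : L.IsLowerTriangular := fun i j h => hLtri i j h
  have hCdet : 0 < C.det := hClow.det_pos hCdiag
  have hAC : Cᵀ * A * C = 1 := transpose_mul_mul_self_eq_one_of_inv_eq hC hCdet.ne'.isUnit
  set M := C⁻¹ * L
  have hL : L = C * M := by
    rw [← Matrix.mul_assoc, mul_nonsing_inv _ hCdet.ne'.isUnit, Matrix.one_mul]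
  have hMlow : M.IsLowerTriangular := hClow.inv.mul hLlow
  have hMdiag : ∀ i, 0 < M i i := hClow.inv_mul_apply_self_pos hCdiag hLlow hLdiag
  have hlossL : cholLoss A L = cholLoss 1 M - Real.log C.det := by
    rw [hL, cholLoss_mul_left hAC hCdet.ne' (hMlow.det_pos hMdiag).ne']
  have hlossC : cholLoss A C = p / 2 - Real.log C.det := by
    simpa [cholLoss_one_one] using cholLoss_mul_left (M := 1) hAC hCdet.ne' (by simp)
  refine ⟨by linarith [half_card_le_cholLoss_one hMlow hMdiag], fun h => ?_⟩
  rw [hL, eq_one_of_cholLoss_one_eq_half_card hMlow hMdiag (by linarith), Matrix.mul_one]
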